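/- Let (Ω, F, P) be a probability space, ψ₀ ∈ ℝ and σ₀² > 0. Let ψ_n : Ω → ℝ be random variables with √n(ψ_n − ψ₀) converging in distribution to N(0, σ₀²); let σ_n² : Ω → (0, ∞) be random variables with σ_n² → σ₀² in probability; and let γ_n : Ω → [0, ∞) be random variables converging in probability to a finite constant γ_∞ ≥ 0. Set λ_n* = γ_n/n and ψ̃_n = ψ_n/(1 + λ_n*). Then for every q > 0, the coverage of the interval [ψ̃_n − q σ_n/√n, ψ̃_n + q σ_n/√n] satisfies P(|ψ̃_n − ψ₀| ≤ q σ_n/√n) → Φ_{0,1}(q) − Φ_{0,1}(−q) as n → ∞, where σ_n = √(σ_n²) and Φ_{0,1} is the standard normal cumulative distribution function. -/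

import Mathlib

/-!
With `ψ̃_n = (1 + γ_n/n)⁻¹ ψ_n`, the studentized statistic `√n (ψ̃_n - ψ₀) / σ_n` equals
`(√n (ψ_n - ψ₀) - ψ₀ γ_n/√n) · ((1 + γ_n/n) σ_n)⁻¹`, and the coverage event is exactly
`{|statistic| ≤ q}`. The nuisance pair `(γ_n/√n, ((1 + γ_n/n) σ_n)⁻¹)` converges in probability
to `(0, σ₀⁻¹)` because `γ_n` is tight, so by Slutsky's theorem the statistic converges in
distribution to `N(0, σ₀²)` scaled by `σ₀⁻¹`, i.e. to `N(0, 1)`. The interval `[-q, q]` has a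
Gaussian-null boundary, and the portmanteau theorem yields the limit `Φ(q) - Φ(-q)`.
-/

open MeasureTheory ProbabilityTheory Filter
open scoped Topology

/-- Convergence in distribution: weak convergence of the pushforward laws. -/
def TendstoInDistribution {Ω E : Type*} [MeasurableSpace Ω] [MeasurableSpace E]
    [TopologicalSpace E] (P : Measure Ω) (X : ℕ → Ω → E) (ν : Measure E) : Prop :=
  ∀ f : BoundedContinuousFunction E ℝ,
    Tendsto (fun n => ∫ ω, f (X n ω) ∂P) atTop (𝓝 (∫ x, f x ∂ν))

/-- Convergence in probability to a constant: `P(|X_n − c| > ε) → 0` for every `ε > 0`. -/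
def TendstoInProbability {Ω E : Type*} [MeasurableSpace Ω] [NormedAddCommGroup E]
    (P : Measure Ω) (X : ℕ → Ω → E) (c : E) : Prop :=
  ∀ ε : ℝ, 0 < ε → Tendsto (fun n => P {ω | ε < ‖X n ω - c‖}) atTop (𝓝 0)

namespace MeasureTheory

variable {ι Ω E F : Type*} {mΩ : MeasurableSpace Ω} {μ : Measure Ω} {l : Filter ι}

lemma tendstoInMeasure_const_of_tendsto [PseudoMetricSpace E] {a : ι → E} {c : E}
    (h : Tendsto a l (𝓝 c)) : TendstoInMeasure μ (fun i _ ↦ a i) l (fun _ ↦ c) := by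
  refine tendstoInMeasure_iff_dist.2 fun ε hε ↦ tendsto_const_nhds.congr' ?_
  filter_upwards [Metric.tendsto_nhds.1 h ε hε] with i hi
  simp [not_le.2 hi]

lemma TendstoInMeasure.prodMk [PseudoMetricSpace E] [PseudoMetricSpace F]
    {X : ι → Ω → E} {Y : ι → Ω → F} {f : Ω → E} {g : Ω → F}
    (hX : TendstoInMeasure μ X l f) (hY : TendstoInMeasure μ Y l g) :
    TendstoInMeasure μ (fun i ω ↦ (X i ω, Y i ω)) l (fun ω ↦ (f ω, g ω)) := by
  rw [tendstoInMeasure_iff_dist] at *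
  intro ε hε
  have hsum := (hX ε hε).add (hY ε hε)
  rw [add_zero] at hsum
  refine tendsto_of_tendsto_of_tendsto_of_le_of_le tendsto_const_nhds hsum (fun _ ↦ bot_le)
    fun i ↦ (measure_mono fun ω hω ↦ ?_).trans (measure_union_le _ _)
  simpa [Prod.dist_eq, le_max_iff] using hω

lemma TendstoInMeasure.comp_continuousAt [PseudoMetricSpace E] [PseudoMetricSpace F]
    {X : ι → Ω → E} {c : E} {g : E → F}
    (hX : TendstoInMeasure μ X l (fun _ ↦ c)) (hg : ContinuousAt g c) :
    TendstoInMeasure μ (fun i ω ↦ g (X i ω)) l (fun _ ↦ g c) := by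
  rw [tendstoInMeasure_iff_dist] at *
  intro ε hε
  obtain ⟨δ, hδ, hgδ⟩ := Metric.continuousAt_iff.1 hg ε hε
  refine tendsto_of_tendsto_of_tendsto_of_le_of_le tendsto_const_nhds (hX δ hδ)
    (fun _ ↦ bot_le) fun i ↦ measure_mono fun ω hω ↦ ?_
  by_contra h
  exact (not_lt.2 hω) (hgδ (not_le.1 h))

lemma TendstoInDistribution.tendsto_measure_preimage_of_null_frontier
    {Ω' : Type*} {mΩ' : MeasurableSpace Ω'} {μ' : Measure Ω'} [IsProbabilityMeasure μ']
    [IsProbabilityMeasure μ]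
    [TopologicalSpace E] [MeasurableSpace E] [OpensMeasurableSpace E] [HasOuterApproxClosed E]
    {X : ι → Ω → E} {Z : Ω' → E} (h : TendstoInDistribution X l Z (fun _ ↦ μ) μ')
    {s : Set E} (hs : MeasurableSet s) (hfront : μ'.map Z (frontier s) = 0) :
    Tendsto (fun i ↦ μ (X i ⁻¹' s)) l (𝓝 (μ'.map Z s)) := by
  have := ProbabilityMeasure.tendsto_measure_of_null_frontier_of_tendsto' h.tendsto hfront
  simpa [Measure.map_apply_of_aemeasurable (h.forall_aemeasurable _) hs] using this

end MeasureTheory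

lemma TendstoInProbability.tendstoInMeasure {Ω E : Type*} [MeasurableSpace Ω]
    [NormedAddCommGroup E] {P : Measure Ω} {X : ℕ → Ω → E} {c : E}
    (h : TendstoInProbability P X c) : TendstoInMeasure P X atTop (fun _ ↦ c) := by
  refine tendstoInMeasure_iff_norm.2 fun ε hε ↦ ?_
  refine tendsto_of_tendsto_of_tendsto_of_le_of_le tendsto_const_nhds (h (ε / 2) (by positivity))
    (fun _ ↦ bot_le) fun n ↦ measure_mono fun ω (hω : ε ≤ _) ↦ ?_
  show ε / 2 < _
  linarith

-- The root-namespace `TendstoInDistribution` is the integral-test notion of the statement;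
-- `MeasureTheory.TendstoInDistribution` is Mathlib's weak convergence in `ProbabilityMeasure E`.
lemma TendstoInDistribution.tendstoInDistribution_id {Ω E : Type*} [MeasurableSpace Ω]
    [MeasurableSpace E] [TopologicalSpace E] [OpensMeasurableSpace E]
    {P : Measure Ω} [IsProbabilityMeasure P] {X : ℕ → Ω → E} {ν : Measure E}
    [IsProbabilityMeasure ν] (h : TendstoInDistribution P X ν) (hX : ∀ n, Measurable (X n)) :
    MeasureTheory.TendstoInDistribution X atTop id (fun _ ↦ P) ν where
  forall_aemeasurable n := (hX n).aemeasurable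
  tendsto := by
    refine ProbabilityMeasure.tendsto_iff_forall_integral_tendsto.2 fun f ↦ ?_
    simp only [ProbabilityMeasure.coe_mk, Measure.map_id]
    simp_rw [integral_map (hX _).aemeasurable f.continuous.aestronglyMeasurable]
    exact h f

lemma ProbabilityTheory.measureReal_Icc_eq_cdf_sub_cdf (μ : Measure ℝ) [IsProbabilityMeasure μ]
    [NullSingletonClass μ] {a b : ℝ} (hab : a ≤ b) :
    μ.real (Set.Icc a b) = cdf μ b - cdf μ a := by
  have hIoc := (cdf μ).measure_Ioc a b
  rw [measure_cdf] at hIoc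
  rw [measureReal_def, ← measure_congr Ioc_ae_eq_Icc, hIoc,
    ENNReal.toReal_ofReal (sub_nonneg.2 (monotone_cdf μ hab))]

lemma ProbabilityTheory.gaussianReal_map_mul_inv_sqrt {v : NNReal} (hv : v ≠ 0) :
    (gaussianReal 0 v).map (· * (√(v : ℝ))⁻¹) = gaussianReal 0 1 := by
  rw [gaussianReal_map_mul_const, mul_zero]
  congr 1
  ext
  simp [inv_pow, hv]

lemma tendstoInMeasure_penalty_and_scale {Ω : Type*} {mΩ : MeasurableSpace Ω} {μ : Measure Ω}
    {γ s : ℕ → Ω → ℝ} {γlim s₀ : ℝ} (hs₀ : 0 < s₀)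
    (hγ : TendstoInMeasure μ γ atTop (fun _ ↦ γlim))
    (hs : TendstoInMeasure μ s atTop (fun _ ↦ s₀)) :
    TendstoInMeasure μ
      (fun (n : ℕ) ω ↦ ((√n)⁻¹ * γ n ω, ((1 + (n : ℝ)⁻¹ * γ n ω) * √(s n ω))⁻¹)) atTop
      (fun _ ↦ (0, (√s₀)⁻¹)) := by
  have hdet : Tendsto (fun n : ℕ ↦ ((√n)⁻¹, (n : ℝ)⁻¹)) atTop (𝓝 (0, 0)) :=
    (tendsto_inv_atTop_zero.comp (Real.tendsto_sqrt_atTop.comp tendsto_natCast_atTop_atTop))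
      |>.prodMk_nhds (tendsto_inv_atTop_zero.comp tendsto_natCast_atTop_atTop)
  have hY : TendstoInMeasure μ (fun (n : ℕ) ω ↦ (((√n)⁻¹, (n : ℝ)⁻¹), (γ n ω, s n ω)))
      atTop (fun _ ↦ ((0, 0), (γlim, s₀))) :=
    (tendstoInMeasure_const_of_tendsto hdet).prodMk (hγ.prodMk hs)
  have hcont : ContinuousAt (fun p : (ℝ × ℝ) × ℝ × ℝ ↦
      (p.1.1 * p.2.1, ((1 + p.1.2 * p.2.1) * √p.2.2)⁻¹)) ((0, 0), (γlim, s₀)) := by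
    refine (by fun_prop : Continuous _).continuousAt.prodMk
      ((by fun_prop : Continuous _).continuousAt.inv₀ ?_)
    simpa using Real.sqrt_ne_zero'.2 hs₀
  simpa only [zero_mul, add_zero, one_mul] using hY.comp_continuousAt hcont

lemma abs_inv_one_add_div_mul_sub_le_iff {n γ ψ ψ₀ s q : ℝ} (hn : 0 < n) (hγ : 0 ≤ γ)
    (hs : 0 < s) :
    |(1 + γ / n)⁻¹ * ψ - ψ₀| ≤ q * √s / √n ↔
      |(√n * (ψ - ψ₀) - ψ₀ * ((√n)⁻¹ * γ)) * ((1 + n⁻¹ * γ) * √s)⁻¹| ≤ q := by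
  have hsn : 0 < √n := Real.sqrt_pos.2 hn
  have hss : 0 < √s := Real.sqrt_pos.2 hs
  have hsq : √n ^ 2 = n := Real.sq_sqrt hn.le
  have hden : 0 < 1 + γ / n := by positivity
  have key : (√n * (ψ - ψ₀) - ψ₀ * ((√n)⁻¹ * γ)) * ((1 + n⁻¹ * γ) * √s)⁻¹ =
      ((1 + γ / n)⁻¹ * ψ - ψ₀) * (√n / √s) := by
    field_simp
    linear_combination ψ₀ * γ * hsq
  rw [key, abs_mul, abs_of_pos (div_pos hsn hss), ← le_div_iff₀ (div_pos hsn hss)]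
  field_simp

theorem l2_penalized_confidence_interval_asymptotic_coverage_general
    {Ω : Type*} [MeasurableSpace Ω] (P : Measure Ω) [IsProbabilityMeasure P]
    (ψ₀ : ℝ) (σ0sq : ℝ) (hσ0sq : 0 < σ0sq)
    (ψn : ℕ → Ω → ℝ) (hψmeas : ∀ n, Measurable (ψn n))
    (hdist : TendstoInDistribution P (fun n ω => Real.sqrt n * (ψn n ω - ψ₀))
      (gaussianReal 0 σ0sq.toNNReal))
    (σ2n : ℕ → Ω → ℝ) (hσmeas : ∀ n, Measurable (σ2n n)) (hσpos : ∀ n ω, 0 < σ2n n ω)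
    (hσprob : TendstoInProbability P σ2n σ0sq)
    (γn : ℕ → Ω → ℝ) (hγmeas : ∀ n, Measurable (γn n)) (hγnonneg : ∀ n ω, 0 ≤ γn n ω)
    (γlim : ℝ) (hγprob : TendstoInProbability P γn γlim)
    (q : ℝ) (hq : 0 < q) :
    Tendsto (fun n =>
        (P {ω | |(1 + γn n ω / n)⁻¹ * ψn n ω - ψ₀| ≤
          q * Real.sqrt (σ2n n ω) / Real.sqrt n}).toReal)
      atTop (𝓝 (cdf (gaussianReal 0 1) q - cdf (gaussianReal 0 1) (-q))) := by
  have hnuisance := tendstoInMeasure_penalty_and_scale hσ0sq hγprob.tendstoInMeasure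
    hσprob.tendstoInMeasure
  have hstat := (hdist.tendstoInDistribution_id fun n ↦ by fun_prop)
    |>.continuous_comp_prodMk_of_tendstoInMeasure_const
      (g := fun p : ℝ × ℝ × ℝ ↦ (p.1 - ψ₀ * p.2.1) * p.2.2) (by fun_prop) hnuisance
      (fun n ↦ by fun_prop)
  have hlaw : (gaussianReal 0 σ0sq.toNNReal).map (fun x ↦ (id x - ψ₀ * 0) * (√σ0sq)⁻¹) =
      gaussianReal 0 1 := by
    simpa [Real.coe_toNNReal _ hσ0sq.le] using
      gaussianReal_map_mul_inv_sqrt (Real.toNNReal_pos.2 hσ0sq).ne'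
  have := nullSingletonClass_gaussianReal (μ := 0) one_ne_zero
  have hcov := hstat.tendsto_measure_preimage_of_null_frontier
    (measurableSet_Icc (a := -q) (b := q))
    (by rw [hlaw, frontier_Icc (by linarith)]; exact (Set.toFinite _).measure_zero _)
  rw [hlaw] at hcov
  rw [← measureReal_Icc_eq_cdf_sub_cdf _ (by linarith)]
  refine ((ENNReal.tendsto_toReal (measure_ne_top _ _)).comp hcov).congr' ?_
  -- at `n = 0` the two events differ, since `q * √s / √0 = 0`
  filter_upwards [eventually_gt_atTop 0] with n hn
  dsimp only [Function.comp_apply]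
  congr 2 with ω
  simp only [Set.mem_preimage, Set.mem_Icc, ← abs_le, Set.mem_ofPred_eq]
  exact (abs_inv_one_add_div_mul_sub_le_iff (Nat.cast_pos.2 hn) (hγnonneg n ω) (hσpos n ω)).symm

/-- asymptotic validity of the confidence interval centered at the L2-penalized
estimator `ψ̃_n = ψ_n/(1 + γ_n/n)`. If `√n(ψ_n − ψ₀) →d N(0, σ₀²)`, `σ_n² →p σ₀² > 0`, and
`γ_n →p γ_∞ ∈ [0, ∞)`, then for every `q > 0`,
`P(|ψ̃_n − ψ₀| ≤ q σ_n/√n) → Φ_{0,1}(q) − Φ_{0,1}(−q)`. -/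
theorem l2_penalized_confidence_interval_asymptotic_coverage
    {Ω : Type*} [MeasurableSpace Ω] (P : Measure Ω) [IsProbabilityMeasure P]
    (ψ₀ : ℝ) (σ0sq : ℝ) (hσ0sq : 0 < σ0sq)
    (ψn : ℕ → Ω → ℝ) (hψmeas : ∀ n, Measurable (ψn n))
    (hdist : TendstoInDistribution P (fun n ω => Real.sqrt n * (ψn n ω - ψ₀))
      (gaussianReal 0 σ0sq.toNNReal))
    (σ2n : ℕ → Ω → ℝ) (hσmeas : ∀ n, Measurable (σ2n n)) (hσpos : ∀ n ω, 0 < σ2n n ω)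
    (hσprob : TendstoInProbability P σ2n σ0sq)
    (γn : ℕ → Ω → ℝ) (hγmeas : ∀ n, Measurable (γn n)) (hγnonneg : ∀ n ω, 0 ≤ γn n ω)
    (γlim : ℝ) (hγlim : 0 ≤ γlim) (hγprob : TendstoInProbability P γn γlim)
    (q : ℝ) (hq : 0 < q) :
    Tendsto (fun n =>
        (P {ω | |(1 + γn n ω / n)⁻¹ * ψn n ω - ψ₀| ≤
          q * Real.sqrt (σ2n n ω) / Real.sqrt n}).toReal)
      atTop (𝓝 (cdf (gaussianReal 0 1) q - cdf (gaussianReal 0 1) (-q))) :=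
  l2_penalized_confidence_interval_asymptotic_coverage_general P ψ₀ σ0sq hσ0sq ψn hψmeas hdist σ2n
    hσmeas hσpos hσprob γn hγmeas hγnonneg γlim hγprob q hq
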